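/- Let V be a finite nonempty type, α a linearly ordered type, p ≥ 1 a natural number, G a simple graph on V with at most p connected components, and m : V → α a value assignment whose image contains at least p + 1 distinct values. Then one min-update step strictly increases the potential: Φ_p(step(G, m)) ≥ Φ_p(m) + 1. -/

import Mathlib

open Finset in
/-- The rank of a vertex `v` under value assignment `m`: the number of distinct
values in the image of `m` that are strictly smaller than `m v`. -/
def rk {V α : Type*} [Fintype V] [LinearOrder α] (m : V → α) (v : V) : ℕ :=
  ((univ.image m).filter (· < m v)).card

open scoped Classical in
/-- One min-update step: each vertex takes the minimum of `m` over its closed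
neighborhood `{v} ∪ {u : G.Adj u v}`. -/
noncomputable def step {V α : Type*} [Fintype V] [LinearOrder α]
    (G : SimpleGraph V) (m : V → α) (v : V) : α :=
  (insert v (Finset.univ.filter (fun u => G.Adj u v))).inf'
    (Finset.insert_nonempty _ _) m

/-- The potential function `Φ_k(m) = Σ_v (k - r_m(v))` (truncated subtraction). -/
def Phi {V α : Type*} [Fintype V] [LinearOrder α] (k : ℕ) (m : V → α) : ℕ :=
  ∑ v, (k - rk m v)

/-!
Let `s₀ < ⋯ < s_p` be the `p + 1` smallest values of `m` and pick vertices carrying them. With at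
most `p` components, two of these vertices, carrying `sᵢ < sⱼ`, are joined by a path, and the path
crosses an edge `xy` with `m x ≤ sᵢ < m y`. One step lowers `y` to at most `m x`, so its rank drops
strictly and lands at most at `i < p`: the summand `p - rk y` of `Φ_p` grows. No other summand
shrinks, because a step never raises a value and only takes values already in the image of `m`.
-/

open Finset

section Rank

variable {V W α : Type*} [Fintype V] [Fintype W] [LinearOrder α]

lemma rk_le_rk_of_image_subset {m : V → α} {m' : W → α}
    (himage : univ.image m' ⊆ univ.image m)
    {w : W} {v : V} (h : m' w ≤ m v) : rk m' w ≤ rk m v := by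
  refine card_le_card fun b hb => ?_
  rw [mem_filter] at hb ⊢
  exact ⟨himage hb.1, hb.2.trans_le h⟩

lemma rk_lt_rk_of_image_subset {m : V → α} {m' : W → α}
    (himage : univ.image m' ⊆ univ.image m)
    {w : W} {v : V} (h : m' w < m v) : rk m' w < rk m v := by
  refine card_lt_card ⟨fun b hb => ?_, fun hsub => ?_⟩
  · rw [mem_filter] at hb ⊢
    exact ⟨himage hb.1, hb.2.trans h⟩
  · have hw : m' w ∈ (univ.image m).filter (· < m v) :=
      mem_filter.2 ⟨himage (mem_image_of_mem m' (mem_univ w)), h⟩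
    exact lt_irrefl _ (mem_filter.1 (hsub hw)).2

lemma lt_of_rk_lt_rk {m : V → α} {u v : V} (h : rk m u < rk m v) : m u < m v :=
  lt_of_not_ge fun hle => h.not_ge (rk_le_rk_of_image_subset subset_rfl hle)

lemma card_filter_lt_orderEmbOfFin (s : Finset α) {k : ℕ} (h : #s = k) (i : Fin k) :
    #(s.filter (· < s.orderEmbOfFin h i)) = i := by
  have hfilter :
      s.filter (· < s.orderEmbOfFin h i) = (Iio i).map (s.orderEmbOfFin h).toEmbedding := by
    ext b
    simp only [mem_filter, mem_map, mem_Iio, RelEmbedding.coe_toEmbedding]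
    constructor
    · rintro ⟨hb, hlt⟩
      obtain ⟨j, rfl⟩ : b ∈ Set.range (s.orderEmbOfFin h) := by
        rwa [range_orderEmbOfFin]
      exact ⟨j, (s.orderEmbOfFin h).lt_iff_lt.1 hlt, rfl⟩
    · rintro ⟨j, hj, rfl⟩
      exact ⟨orderEmbOfFin_mem s h j, (s.orderEmbOfFin h).lt_iff_lt.2 hj⟩
  rw [hfilter, card_map, Fin.card_Iio]

lemma exists_rk_eq {m : V → α} {k : ℕ} (hk : k < #(univ.image m)) : ∃ v, rk m v = k := by
  set s := univ.image m
  obtain ⟨v, -, hv⟩ := mem_image.1 (orderEmbOfFin_mem s rfl ⟨k, hk⟩)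
  exact ⟨v, by rw [rk, hv, card_filter_lt_orderEmbOfFin]⟩

lemma Phi_lt_Phi {m m' : V → α} {k : ℕ} (himage : univ.image m' ⊆ univ.image m)
    (hle : ∀ v, m' v ≤ m v) {y : V} (hy : m' y < m y) (hk : rk m' y < k) :
    Phi k m < Phi k m' := by
  refine sum_lt_sum (fun v _ => Nat.sub_le_sub_left (rk_le_rk_of_image_subset himage (hle v)) k)
    ⟨y, mem_univ y, ?_⟩
  have := rk_lt_rk_of_image_subset himage hy
  omega

end Rank

section Step

variable {V α : Type*} [Fintype V] [LinearOrder α] {G : SimpleGraph V} {m : V → α}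

lemma step_le (v : V) : step G m v ≤ m v := by
  classical
  exact inf'_le _ (mem_insert_self _ _)

lemma step_le_of_adj {x y : V} (h : G.Adj x y) : step G m y ≤ m x := by
  classical
  exact inf'_le _ (by simp [h])

lemma image_step_subset : univ.image (step G m) ⊆ univ.image m := by
  classical
  intro a ha
  obtain ⟨v, -, rfl⟩ := mem_image.1 ha
  obtain ⟨u, -, hu⟩ := exists_mem_eq_inf' (insert_nonempty v (univ.filter (G.Adj · v))) m
  exact mem_image.2 ⟨u, mem_univ u, hu.symm⟩

end Step

lemma SimpleGraph.exists_adj_lt_rk_lt {V α : Type*} [Fintype V] [LinearOrder α]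
    {G : SimpleGraph V} {p : ℕ} (hG : Nat.card G.ConnectedComponent ≤ p)
    {m : V → α} (hm : p + 1 ≤ #(univ.image m)) :
    ∃ x y, G.Adj x y ∧ m x < m y ∧ rk m x < p := by
  choose v hv using fun i : Fin (p + 1) => exists_rk_eq (m := m) (by omega : (i : ℕ) < _)
  obtain ⟨i, j, hij, hcomp⟩ :
      ∃ i j, i ≠ j ∧ G.connectedComponentMk (v i) = G.connectedComponentMk (v j) := by
    by_contra! hinj
    have := Nat.card_le_card_of_injective (fun i => G.connectedComponentMk (v i))
      fun i j h => by_contra fun hne => hinj i j hne h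
    rw [Nat.card_fin] at this
    omega
  wlog hlt : i < j generalizing i j
  · exact this j i hij.symm hcomp.symm (by omega)
  obtain ⟨W⟩ := ConnectedComponent.exact hcomp
  have hval : m (v i) < m (v j) := lt_of_rk_lt_rk (by rw [hv, hv]; exact hlt)
  obtain ⟨d, -, hd, hd'⟩ := W.exists_boundary_dart {x | m x ≤ m (v i)} le_rfl hval.not_ge
  refine ⟨d.fst, d.snd, d.adj, hd.trans_lt (not_le.1 hd'), ?_⟩
  have := rk_le_rk_of_image_subset subset_rfl hd
  have := hv i
  omega

theorem phi_step_strict_increase_general {V α : Type*} [Fintype V]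
    [LinearOrder α] (p : ℕ) (G : SimpleGraph V)
    (hG : Nat.card G.ConnectedComponent ≤ p)
    (m : V → α) (hm : p + 1 ≤ (Finset.univ.image m).card) :
    Phi p (step G m) ≥ Phi p m + 1 := by
  obtain ⟨x, y, hxy, hlt, hx⟩ := G.exists_adj_lt_rk_lt hG hm
  have hy : step G m y ≤ m x := step_le_of_adj hxy
  exact Phi_lt_Phi image_step_subset step_le (hy.trans_lt hlt)
    ((rk_le_rk_of_image_subset image_step_subset hy).trans_lt hx)

/-- With at most `p` connected components and more than `p`
distinct values, one min-update step strictly increases the potential `Φ_p`. -/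
theorem phi_step_strict_increase {V α : Type*} [Fintype V] [Nonempty V]
    [LinearOrder α] (p : ℕ) (hp : 1 ≤ p) (G : SimpleGraph V)
    (hG : Nat.card G.ConnectedComponent ≤ p)
    (m : V → α) (hm : p + 1 ≤ (Finset.univ.image m).card) :
    Phi p (step G m) ≥ Phi p m + 1 :=
  phi_step_strict_increase_general p G hG m hm
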